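/- The map Φ̂ induced by Φ(w₁ + ℓ w₂) = w₁⁻¹ i w₁ + ℓ (w₁⁻¹ w₂) maps onto the spherized null cone K: (i) for all unit quaternions w₁, w₂, the pair x = (conj(w₁) * i * w₁, conj(w₁) * w₂) satisfies Re (x.1) = 0, normSq (x.1) = 1, normSq (x.2) = 1 (hence x ⊛ x = 0); and (ii) for every pair (v₁, v₂) of quaternions with Re v₁ = 0, normSq v₁ = 1, and normSq v₂ = 1, there exist unit quaternions w₁, w₂ such that conj(w₁) * i * w₁ = v₁ and conj(w₁) * w₂ = v₂ (one may take w₂ = w₁ * v₂). -/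

import Mathlib

/-!
Conjugation `q ↦ w̄ q w` by a unit quaternion preserves real parts and norms, so it sends `i` to
a pure unit quaternion `a`; and `(a, b)` with `a` pure and `|a| = |b|` is null because
`a² = -|a|²` and `b b̄ = |b|²`. Conversely, for a pure unit `v` we have `i² = v² = -1`, whence
`i (1 - i v) = (1 - i v) v`; normalizing `1 - i v` gives a unit `w` with `w̄ i w = v`, except at
`v = -i`, where `1 - i v = 0` and `j` does the job instead.
-/

open Quaternion

noncomputable section

/-- The quaternion imaginary unit `i`. -/
def qi : ℍ[ℝ] := ⟨0, 1, 0, 0⟩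

/-- The split-octonion product on `ℍ × ℍ`: `(a,b) ⊛ (c,d) = (a*c + d*conj b, conj a * d + c*b)`. -/
def omul (x y : ℍ[ℝ] × ℍ[ℝ]) : ℍ[ℝ] × ℍ[ℝ] :=
  (x.1 * y.1 + y.2 * star x.2, star x.1 * y.2 + y.1 * x.2)

@[simp] theorem re_qi : qi.re = 0 := rfl
@[simp] theorem imI_qi : qi.imI = 1 := rfl
@[simp] theorem imJ_qi : qi.imJ = 0 := rfl
@[simp] theorem imK_qi : qi.imK = 0 := rfl

def qj : ℍ[ℝ] := ⟨0, 0, 1, 0⟩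

@[simp] theorem re_qj : qj.re = 0 := rfl
@[simp] theorem imI_qj : qj.imI = 0 := rfl
@[simp] theorem imJ_qj : qj.imJ = 1 := rfl
@[simp] theorem imK_qj : qj.imK = 0 := rfl

theorem qi_mul_self : qi * qi = -1 := by
  ext <;> simp

theorem normSq_qi : normSq qi = 1 := by
  simp [normSq_def']

theorem qi_mul_qj : qi * qj = qj * -qi := by
  ext <;> simp

namespace Quaternion

variable {R : Type*} [CommRing R]

theorem star_mul_mul_self_of_mul_eq {u v w : ℍ[R]} (h : u * w = w * v) :
    star w * u * w = normSq w • v := by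
  rw [mul_assoc, h, ← mul_assoc, star_mul_self, coe_mul_eq_smul]

variable [NoZeroDivisors R] [CharZero R]

theorem mul_self_of_re_eq_zero {a : ℍ[R]} (ha : a.re = 0) :
    a * a = -((normSq a : R) : ℍ[R]) := by
  rw [← star_mul_self, star_eq_neg.mpr ha, neg_mul, neg_neg]

theorem re_star_mul_mul_self_eq_zero {q : ℍ[R]} (hq : q.re = 0) (w : ℍ[R]) :
    (star w * q * w).re = 0 := by
  rw [← star_eq_neg, star_mul, star_mul, star_star, star_eq_neg.mpr hq, neg_mul, mul_neg,
    ← mul_assoc]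

end Quaternion

theorem mul_one_sub_mul_eq_one_sub_mul_mul {A : Type*} [Ring A] {u v : A} (hu : u * u = -1)
    (hv : v * v = -1) : u * (1 - u * v) = (1 - u * v) * v := by
  rw [mul_sub, sub_mul, ← mul_assoc, hu, mul_assoc, hv, mul_one, one_mul, neg_one_mul,
    mul_neg_one, sub_neg_eq_add, sub_neg_eq_add, add_comm]

theorem omul_self_eq_zero {a b : ℍ[ℝ]} (ha : a.re = 0) (hab : normSq a = normSq b) :
    omul (a, b) (a, b) = 0 := by
  simp only [omul, Prod.mk_eq_zero]
  constructor
  · rw [mul_self_of_re_eq_zero ha, self_mul_star, hab, neg_add_cancel]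
  · rw [star_eq_neg.mpr ha, neg_mul, neg_add_cancel]

theorem exists_ne_zero_qi_mul_eq_mul {v : ℍ[ℝ]} (hre : v.re = 0) (hn : normSq v = 1) :
    ∃ w ≠ 0, qi * w = w * v := by
  have hv : v * v = -1 := by rw [mul_self_of_re_eq_zero hre, hn, coe_one]
  by_cases hw : 1 - qi * v = 0
  · have hv_eq : v = -qi := by
      have : qi * (qi * v) = qi := by rw [← sub_eq_zero.mp hw, mul_one]
      rwa [← mul_assoc, qi_mul_self, neg_one_mul, neg_eq_iff_eq_neg] at this
    exact ⟨qj, fun h => by simpa using congrArg QuaternionAlgebra.imJ h, hv_eq ▸ qi_mul_qj⟩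
  · exact ⟨_, hw, mul_one_sub_mul_eq_one_sub_mul_mul qi_mul_self hv⟩

theorem exists_normSq_eq_one_star_mul_mul_eq {u v w : ℍ[ℝ]} (hw : w ≠ 0) (h : u * w = w * v) :
    ∃ w₁ : ℍ[ℝ], normSq w₁ = 1 ∧ star w₁ * u * w₁ = v := by
  have hnorm : ‖w‖ ≠ 0 := norm_ne_zero_iff.mpr hw
  have hunit : normSq (‖w‖⁻¹ • w) = 1 := by
    rw [normSq_smul, normSq_eq_norm_mul_self, inv_pow, sq,
      inv_mul_cancel₀ (mul_ne_zero hnorm hnorm)]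
  refine ⟨‖w‖⁻¹ • w, hunit, ?_⟩
  rw [star_mul_mul_self_of_mul_eq (by rw [mul_smul_comm, h, smul_mul_assoc]), hunit, one_smul]

/-- The induced map `Φ̂` lands in, and maps onto, the spherized null cone `K`. -/
theorem phi_onto_spherized_cone :
    (∀ w₁ w₂ : ℍ[ℝ], normSq w₁ = 1 → normSq w₂ = 1 →
      (star w₁ * qi * w₁).re = 0 ∧ normSq (star w₁ * qi * w₁) = 1 ∧
      normSq (star w₁ * w₂) = 1 ∧
      omul (star w₁ * qi * w₁, star w₁ * w₂) (star w₁ * qi * w₁, star w₁ * w₂) = 0) ∧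
    (∀ v₁ v₂ : ℍ[ℝ], v₁.re = 0 → normSq v₁ = 1 → normSq v₂ = 1 →
      ∃ w₁ w₂ : ℍ[ℝ], normSq w₁ = 1 ∧ normSq w₂ = 1 ∧
        star w₁ * qi * w₁ = v₁ ∧ star w₁ * w₂ = v₂) := by
  constructor
  · intro w₁ w₂ h₁ h₂
    have hre := re_star_mul_mul_self_eq_zero re_qi w₁
    have ha : normSq (star w₁ * qi * w₁) = 1 := by simp [normSq_star, h₁, normSq_qi]
    have hb : normSq (star w₁ * w₂) = 1 := by simp [normSq_star, h₁, h₂]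
    exact ⟨hre, ha, hb, omul_self_eq_zero hre (ha.trans hb.symm)⟩
  · intro v₁ v₂ hre hn₁ hn₂
    obtain ⟨w, hw, hcomm⟩ := exists_ne_zero_qi_mul_eq_mul hre hn₁
    obtain ⟨w₁, hw₁, hconj⟩ := exists_normSq_eq_one_star_mul_mul_eq hw hcomm
    refine ⟨w₁, w₁ * v₂, hw₁, by rw [map_mul, hw₁, hn₂, one_mul], hconj, ?_⟩
    rw [← mul_assoc, star_mul_self, hw₁, coe_one, one_mul]
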